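/- arXiv:2206.07601 — 7 statements merged into one kernel-verified Lean document; each statement's English description precedes it below -/
import Mathlib

section
/- For every real number x > 1 it holds that 2^(-1/x) > x^(1/(1-x)). -/
theorem stmt_2 (x : ℝ) (hx : 1 < x) : (2 : ℝ) ^ (-1 / x) > x ^ (1 / (1 - x)) := by
  have hx0 : (0:ℝ) < x := by linarith
  have hx1 : (0:ℝ) < x - 1 := by linarith
  rw [gt_iff_lt, ← Real.log_lt_log_iff (by positivity) (by positivity),
    Real.log_rpow hx0, Real.log_rpow two_pos]
  have hlog2 : Real.log 2 < 1 := by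
    have := Real.log_lt_sub_one_of_pos (x := 2) (by norm_num) (by norm_num)
    linarith
  have hlogx : x - 1 < x * Real.log x := by
    have h := Real.log_lt_sub_one_of_pos (x := 1/x) (by positivity) (by
      intro h
      field_simp at h
      linarith)
    rw [one_div, Real.log_inv] at h
    have := mul_lt_mul_of_pos_left h hx0
    rw [mul_sub, mul_inv_cancel₀ (ne_of_gt hx0)] at this
    nlinarith
  have hlog2pos : 0 < Real.log 2 := Real.log_pos (by norm_num)
  have key : (x - 1) * Real.log 2 < x * Real.log x := by nlinarith
  have h2 : Real.log 2 / x < Real.log x / (x - 1) := by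
    rw [div_lt_div_iff₀ hx0 hx1]; nlinarith
  have e1 : 1 / (1 - x) * Real.log x = -(Real.log x / (x - 1)) := by
    have h1x : (1:ℝ) - x ≠ 0 := by intro h; linarith
    field_simp
    ring
  have e2 : -1 / x * Real.log 2 = -(Real.log 2 / x) := by ring
  rw [e1, e2]
  linarith
end

section
/- For every real number x > 1 it holds that 2^(-1/x - 1) > (x * 2^x)^(1/(1-x)). -/
theorem stmt_3 (x : ℝ) (hx : 1 < x) :
    (2 : ℝ) ^ (-1 / x - 1) > (x * 2 ^ x) ^ (1 / (1 - x)) := by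
  have hx0 : (0 : ℝ) < x := lt_trans one_pos hx
  have h2 : (0 : ℝ) < 2 := by norm_num
  have hb : (0 : ℝ) < x * 2 ^ x := mul_pos hx0 (Real.rpow_pos_of_pos h2 x)
  have hlog2 : (0 : ℝ) < Real.log 2 := Real.log_pos (by norm_num)
  have hlogx : (0 : ℝ) < Real.log x := Real.log_pos hx
  have h1x : 1 - x < 0 := by linarith
  rw [Real.rpow_def_of_pos hb, Real.rpow_def_of_pos h2, gt_iff_lt, Real.exp_lt_exp]
  have hlb : Real.log (x * 2 ^ x) = Real.log x + x * Real.log 2 := by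
    rw [Real.log_mul (ne_of_gt hx0) (ne_of_gt (Real.rpow_pos_of_pos h2 x)),
      Real.log_rpow h2]
  rw [hlb, mul_one_div, div_lt_iff_of_neg h1x]
  have hxne : x ≠ 0 := ne_of_gt hx0
  field_simp
  nlinarith [mul_pos hlogx hx0]
end

section
/- Let r > 1 and L_g(x) = 1 - 2^r (1/2 - x)^r on [0,1/2). Let x_g = 1/2 - (r·2^r)^(1/(1-r)) be the unique point in (0,1/2) where the derivative of L_g equals 1. Then (1/2)(1 - 2^(-1/r)) < x_g, i.e. L_g^{-1}(1/2) < x_g. -/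
theorem stmt_8 (r : ℝ) (hr : 1 < r) :
    1 / 2 * (1 - (2 : ℝ) ^ (-1 / r)) < 1 / 2 - (r * 2 ^ r) ^ (1 / (1 - r)) := by
  have hr0 : (0:ℝ) < r := by linarith
  have hsneg : 1 / (1 - r) < 0 := by
    apply div_neg_of_pos_of_neg one_pos; linarith
  set s : ℝ := 1 / (1 - r) with hs
  have h2pos : (0:ℝ) < 2 ^ r := Real.rpow_pos_of_pos (by norm_num) r
  have hsplit : (r * 2 ^ r) ^ s = r ^ s * (2:ℝ) ^ (r * s) := by
    rw [Real.mul_rpow hr0.le h2pos.le]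
    rw [show ((2:ℝ) ^ r) ^ s = (2:ℝ) ^ (r * s) from
      (Real.rpow_mul (by norm_num) r s).symm]
  have h1 : r ^ s < 1 := Real.rpow_lt_one_of_one_lt_of_neg hr hsneg
  have hexp : r * s < -1 - 1 / r := by
    rw [hs, mul_one_div, div_lt_iff_of_neg (by linarith : (1:ℝ) - r < 0)]
    have h1r : 0 < 1 / r := by positivity
    have : (-1 - 1 / r) * (1 - r) = r - 1 / r + (1 / r * r - 1) := by ring
    rw [this, one_div_mul_cancel hr0.ne']
    linarith
  have h2 : (2:ℝ) ^ (r * s) < (2:ℝ) ^ (-1 - 1 / r) :=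
    Real.rpow_lt_rpow_left_iff (by norm_num) |>.mpr hexp
  have hmul : (r * 2 ^ r) ^ s < (2:ℝ) ^ (-1 - 1 / r) := by
    rw [hsplit]
    calc r ^ s * (2:ℝ) ^ (r * s) < 1 * (2:ℝ) ^ (-1 - 1 / r) :=
          mul_lt_mul'' h1 h2 (Real.rpow_pos_of_pos hr0 s).le
            (Real.rpow_pos_of_pos (by norm_num) _).le
      _ = (2:ℝ) ^ (-1 - 1 / r) := one_mul _
  have hrw : (2:ℝ) ^ (-1 - 1 / r) = 1 / 2 * (2:ℝ) ^ (-1 / r) := by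
    rw [show (-1 - 1 / r : ℝ) = -1 + (-1 / r) by ring,
      Real.rpow_add (by norm_num), Real.rpow_neg_one]
    norm_num
  rw [hrw] at hmul
  nlinarith [Real.rpow_pos_of_pos (show (0:ℝ) < 2 by norm_num) (-1 / r)]
end

section
/- Let ℓ ≥ 1, r ≥ 1, w ∈ ℕ, and define L(x) = 1 - (1-2x)^(ℓ·r) on [0,1/2) and R(x) = 2x - 1 on [1/2,1]. Then the preimage (R^w ∘ L)^{-1}((1/2, 3/4)) is the interval ( (1/2)(1 - 2^(-(w+1)/(ℓ r))), (1/2)(1 - 2^(-(w+2)/(ℓ r))) ), and its Lebesgue measure (length) equals (1/2)·(2^(-(w+1)/(ℓ r)) - 2^(-(w+2)/(ℓ r))). -/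
lemma iter_aff (w : ℕ) (z : ℝ) :
    (fun z : ℝ => 2 * z - 1)^[w] z = 2 ^ w * (z - 1) + 1 := by
  induction w generalizing z with
  | zero => simp
  | succ n ih => rw [Function.iterate_succ_apply, ih]; ring

theorem stmt_11 (ℓ r : ℝ) (hℓ : 1 ≤ ℓ) (hr : 1 ≤ r) (w : ℕ) :
    Set.Ico (0 : ℝ) (1 / 2) ∩
      (fun x : ℝ => (fun z : ℝ => 2 * z - 1)^[w] (1 - (1 - 2 * x) ^ (ℓ * r))) ⁻¹'
        Set.Ioo (1 / 2 : ℝ) (3 / 4) =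
      Set.Ioo (1 / 2 * (1 - 2 ^ (-((w : ℝ) + 1) / (ℓ * r))))
        (1 / 2 * (1 - 2 ^ (-((w : ℝ) + 2) / (ℓ * r)))) ∧
    MeasureTheory.volume
        (Set.Ioo (1 / 2 * (1 - (2 : ℝ) ^ (-((w : ℝ) + 1) / (ℓ * r))))
          (1 / 2 * (1 - (2 : ℝ) ^ (-((w : ℝ) + 2) / (ℓ * r))))) =
      ENNReal.ofReal
        (1 / 2 * ((2 : ℝ) ^ (-((w : ℝ) + 1) / (ℓ * r)) - (2 : ℝ) ^ (-((w : ℝ) + 2) / (ℓ * r)))) := by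
  set c : ℝ := ℓ * r with hc
  have hc1 : (1 : ℝ) ≤ c := by nlinarith
  have hc0 : (0 : ℝ) < c := by linarith
  set a : ℝ := (2 : ℝ) ^ (-((w : ℝ) + 1) / c) with ha
  set b : ℝ := (2 : ℝ) ^ (-((w : ℝ) + 2) / c) with hb
  have ha0 : 0 < a := Real.rpow_pos_of_pos (by norm_num) _
  have hb0 : 0 < b := Real.rpow_pos_of_pos (by norm_num) _
  have ha1 : a ≤ 1 := Real.rpow_le_one_of_one_le_of_nonpos (by norm_num)
    (by
      apply div_nonpos_of_nonpos_of_nonneg _ hc0.le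
      have : (0:ℝ) ≤ (w:ℝ) := Nat.cast_nonneg w
      linarith)
  have hb1 : b ≤ 1 := Real.rpow_le_one_of_one_le_of_nonpos (by norm_num)
    (by
      apply div_nonpos_of_nonpos_of_nonneg _ hc0.le
      have : (0:ℝ) ≤ (w:ℝ) := Nat.cast_nonneg w
      linarith)
  have key : ∀ e : ℝ, ((2 : ℝ) ^ (e / c)) ^ c = (2 : ℝ) ^ e := by
    intro e
    rw [← Real.rpow_mul (by norm_num), div_mul_cancel₀ _ hc0.ne']
  have hac : a ^ c = (2 : ℝ) ^ (-((w : ℝ) + 1)) := key _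
  have hbc : b ^ c = (2 : ℝ) ^ (-((w : ℝ) + 2)) := key _
  have h2w : ((2 : ℝ) ^ w) * (2 : ℝ) ^ (-((w : ℝ) + 1)) = 1 / 2 := by
    rw [← Real.rpow_natCast 2 w, ← Real.rpow_add (by norm_num)]
    norm_num
  have h2w' : ((2 : ℝ) ^ w) * (2 : ℝ) ^ (-((w : ℝ) + 2)) = 1 / 4 := by
    rw [← Real.rpow_natCast 2 w, ← Real.rpow_add (by norm_num)]
    have : (w : ℝ) + (-((w : ℝ) + 2)) = -2 := by ring
    rw [this, Real.rpow_neg (by norm_num), show ((2:ℝ))^(2:ℝ) = 4 by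
      rw [show (2:ℝ)=((2:ℕ):ℝ) by norm_num, Real.rpow_natCast]; norm_num]
    norm_num
  have hw0 : (0 : ℝ) < 2 ^ w := by positivity
  constructor
  · ext x
    simp only [Set.mem_inter_iff, Set.mem_Ico, Set.mem_preimage, Set.mem_Ioo, iter_aff]
    constructor
    · rintro ⟨⟨hx0, hx2⟩, h1, h2⟩
      have ht0 : (0 : ℝ) < 1 - 2 * x := by linarith
      have h1' : (1 - 2 * x) ^ c < a ^ c := by
        rw [hac]
        have : (2 : ℝ) ^ w * (1 - 2 * x) ^ c < (2 : ℝ) ^ w * (2 : ℝ) ^ (-((w : ℝ) + 1)) := by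
          rw [h2w]; nlinarith
        exact lt_of_mul_lt_mul_left this hw0.le
      have h2' : b ^ c < (1 - 2 * x) ^ c := by
        rw [hbc]
        have : (2 : ℝ) ^ w * (2 : ℝ) ^ (-((w : ℝ) + 2)) < (2 : ℝ) ^ w * (1 - 2 * x) ^ c := by
          rw [h2w']; nlinarith
        exact lt_of_mul_lt_mul_left this hw0.le
      have hlt1 : 1 - 2 * x < a := (Real.rpow_lt_rpow_iff ht0.le ha0.le hc0).mp h1'
      have hlt2 : b < 1 - 2 * x := (Real.rpow_lt_rpow_iff hb0.le ht0.le hc0).mp h2'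
      constructor <;> linarith
    · rintro ⟨hx1, hx2⟩
      have ht0 : (0 : ℝ) < 1 - 2 * x := by linarith
      have hlt1 : 1 - 2 * x < a := by linarith
      have hlt2 : b < 1 - 2 * x := by linarith
      have h1' : (1 - 2 * x) ^ c < (2 : ℝ) ^ (-((w : ℝ) + 1)) := by
        rw [← hac]; exact Real.rpow_lt_rpow ht0.le hlt1 hc0
      have h2' : (2 : ℝ) ^ (-((w : ℝ) + 2)) < (1 - 2 * x) ^ c := by
        rw [← hbc]; exact Real.rpow_lt_rpow hb0.le hlt2 hc0
      have m1 := (mul_lt_mul_iff_right₀ hw0).mpr h1'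
      have m2 := (mul_lt_mul_iff_right₀ hw0).mpr h2'
      rw [h2w] at m1
      rw [h2w'] at m2
      refine ⟨⟨by nlinarith, by nlinarith⟩, by nlinarith, by nlinarith⟩
  · rw [Real.volume_Ioo]
    congr 1
    ring
end

section
/- Let (p_b)_{b∈B} be strictly positive reals indexed by a finite nonempty set B with ∑_b p_b < 1, and let ℓ_b > 1 for each b ∈ B. Set θ = ∑_{b∈B} p_b ℓ_b, ℓ_max = max_b ℓ_b, γ₁ = log θ / log ℓ_max, and for each b set π_b = ∑_{j : ℓ_j ≥ ℓ_b} p_j and γ₂ = 1 + max_b (log π_b / log ℓ_b). If θ < 1, then γ₂ ≤ γ₁. -/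
theorem stmt_12 {B : Type*} [Fintype B] [Nonempty B]
    (p ℓ : B → ℝ) (hp : ∀ b, 0 < p b) (hpsum : ∑ b, p b < 1) (hℓ : ∀ b, 1 < ℓ b)
    (θ : ℝ) (hθdef : θ = ∑ b, p b * ℓ b) (hθ : θ < 1)
    (ℓmax : ℝ) (hℓmax : ℓmax = Finset.univ.sup' Finset.univ_nonempty ℓ)
    (γ₁ : ℝ) (hγ₁ : γ₁ = Real.log θ / Real.log ℓmax)
    (π : B → ℝ) (hπ : ∀ b, π b = ∑ j ∈ Finset.univ.filter (fun j => ℓ b ≤ ℓ j), p j)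
    (γ₂ : ℝ)
    (hγ₂ : γ₂ = 1 + Finset.univ.sup' Finset.univ_nonempty
      (fun b => Real.log (π b) / Real.log (ℓ b))) :
    γ₂ ≤ γ₁ := by
  have hθpos : 0 < θ := by
    rw [hθdef]
    exact Finset.sum_pos (fun b _ => mul_pos (hp b) (lt_trans one_pos (hℓ b)))
      Finset.univ_nonempty
  have hlogθ : Real.log θ < 0 := Real.log_neg hθpos hθ
  have hℓmax1 : 1 < ℓmax := by
    obtain ⟨b⟩ := ‹Nonempty B›
    have := Finset.le_sup' ℓ (Finset.mem_univ b)
    rw [hℓmax]; exact lt_of_lt_of_le (hℓ b) this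
  have hlogmax : 0 < Real.log ℓmax := Real.log_pos hℓmax1
  rw [hγ₂, hγ₁]
  have key : ∀ b : B, 1 + Real.log (π b) / Real.log (ℓ b) ≤ Real.log θ / Real.log ℓmax := by
    intro b
    have hℓb : 0 < Real.log (ℓ b) := Real.log_pos (hℓ b)
    have hπpos : 0 < π b := by
      rw [hπ b]
      apply Finset.sum_pos (fun j _ => hp j)
      exact ⟨b, Finset.mem_filter.mpr ⟨Finset.mem_univ b, le_refl _⟩⟩
    have hπℓ : π b * ℓ b ≤ θ := by
      rw [hπ b, hθdef, Finset.sum_mul]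
      calc ∑ j ∈ Finset.univ.filter (fun j => ℓ b ≤ ℓ j), p j * ℓ b
          ≤ ∑ j ∈ Finset.univ.filter (fun j => ℓ b ≤ ℓ j), p j * ℓ j := by
            apply Finset.sum_le_sum
            intro j hj
            exact mul_le_mul_of_nonneg_left (Finset.mem_filter.mp hj).2 (hp j).le
        _ ≤ ∑ j, p j * ℓ j :=
            Finset.sum_le_sum_of_subset_of_nonneg (Finset.filter_subset _ _)
              (fun j _ _ => mul_nonneg (hp j).le (lt_trans one_pos (hℓ j)).le)
    have hlog : Real.log (π b) + Real.log (ℓ b) ≤ Real.log θ := by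
      rw [← Real.log_mul (ne_of_gt hπpos) (ne_of_gt (lt_trans one_pos (hℓ b)))]
      exact Real.log_le_log (mul_pos hπpos (lt_trans one_pos (hℓ b))) hπℓ
    have h1 : 1 + Real.log (π b) / Real.log (ℓ b) ≤ Real.log θ / Real.log (ℓ b) := by
      have e : 1 + Real.log (π b) / Real.log (ℓ b)
          = (Real.log (ℓ b) + Real.log (π b)) / Real.log (ℓ b) := by
        field_simp
      rw [e, div_le_div_iff₀ hℓb hℓb]
      nlinarith
    have hle : Real.log (ℓ b) ≤ Real.log ℓmax := by
      apply Real.log_le_log (lt_trans one_pos (hℓ b))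
      rw [hℓmax]; exact Finset.le_sup' ℓ (Finset.mem_univ b)
    have h2 : Real.log θ / Real.log (ℓ b) ≤ Real.log θ / Real.log ℓmax := by
      rw [div_le_div_iff₀ hℓb hlogmax]
      nlinarith
    linarith
  have hsup : (Finset.univ.sup' Finset.univ_nonempty
      fun b => Real.log (π b) / Real.log (ℓ b)) ≤ Real.log θ / Real.log ℓmax - 1 := by
    apply Finset.sup'_le
    intro b _
    have := key b
    linarith
  linarith
end

section
/- Let 0 < p_B < 1, θ ∈ (0,1), and suppose for each k ∈ ℕ a finite index set Σ_B^k with weights p_𝐛 > 0 and values ℓ_𝐛 ≥ 1 such that ∑_{𝐛 ∈ Σ_B^k} p_𝐛 = p_B^k and ∑_{𝐛 ∈ Σ_B^k} p_𝐛 ℓ_𝐛 = θ^k. Then for any constants r > 0 and any d > 1, ∑_{𝐛 ∈ Σ_B^k} p_𝐛 · d^{-(n-k) ℓ_𝐛^{-1} r^{-1}} ≤ θ^k · r/((n-k) log d) for all integers n > k. -/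
theorem stmt_13 (pB θ : ℝ) (hpB : 0 < pB) (hpB1 : pB < 1) (hθ : θ ∈ Set.Ioo (0 : ℝ) 1)
    (ι : ℕ → Type*) [∀ k, Fintype (ι k)]
    (p : ∀ k, ι k → ℝ) (ℓ : ∀ k, ι k → ℝ)
    (hp : ∀ k b, 0 < p k b) (hℓ : ∀ k b, 1 ≤ ℓ k b)
    (hpsum : ∀ k, ∑ b, p k b = pB ^ k)
    (hpℓsum : ∀ k, ∑ b, p k b * ℓ k b = θ ^ k)
    (r d : ℝ) (hr : 0 < r) (hd : 1 < d) (k n : ℕ) (hkn : k < n) :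
    ∑ b, p k b * d ^ (-((n : ℝ) - k) * (ℓ k b)⁻¹ * r⁻¹) ≤
      θ ^ k * r / (((n : ℝ) - k) * Real.log d) := by
  have hnk : (0:ℝ) < (n:ℝ) - k := by
    have : (k:ℝ) < n := by exact_mod_cast hkn
    linarith
  have hlogd : 0 < Real.log d := Real.log_pos hd
  set C := ((n:ℝ) - k) * Real.log d with hC
  have hCpos : 0 < C := mul_pos hnk hlogd
  have key : ∀ b, d ^ (-((n : ℝ) - k) * (ℓ k b)⁻¹ * r⁻¹) ≤ ℓ k b * r / C := by
    intro b
    have hℓb : (0:ℝ) < ℓ k b := lt_of_lt_of_le one_pos (hℓ k b)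
    set t := ((n:ℝ) - k) * (ℓ k b)⁻¹ * r⁻¹ * Real.log d with ht
    have htpos : 0 < t := by positivity
    have hrw : d ^ (-((n : ℝ) - k) * (ℓ k b)⁻¹ * r⁻¹) = Real.exp (-t) := by
      rw [Real.rpow_def_of_pos (lt_trans one_pos hd)]
      rw [ht]; ring_nf
    rw [hrw, Real.exp_neg]
    have h1 : (Real.exp t)⁻¹ ≤ t⁻¹ := by
      apply inv_anti₀ htpos
      have := Real.add_one_le_exp t
      linarith
    refine h1.trans (le_of_eq ?_)
    rw [ht, hC]
    field_simp
  calc ∑ b, p k b * d ^ (-((n : ℝ) - k) * (ℓ k b)⁻¹ * r⁻¹)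
      ≤ ∑ b, p k b * (ℓ k b * r / C) :=
        Finset.sum_le_sum fun b _ => mul_le_mul_of_nonneg_left (key b) (hp k b).le
    _ = (∑ b, p k b * ℓ k b) * (r / C) := by
        rw [Finset.sum_mul]; exact Finset.sum_congr rfl fun b _ => by ring
    _ = θ ^ k * r / C := by rw [hpℓsum k, mul_div_assoc]
end

section
/- Let ℓ ≥ 1, r ≥ 1 be real numbers, let w ∈ ℕ, and let q, t ≥ 1 with q·t = ℓ. For y ∈ [0,1/2), let L_q(x) = (1/2)(1-(1-2x)^q), L_t(x) = (1/2)(1-(1-2x)^t), G(x) = 1-(1-2x)^r, and R(x) = 2x-1, and suppose 2^w · (1-2y)^{ℓ r} > 1/4 (i.e., w is large enough that R^w ∘ G ∘ L_t ∘ L_q maps y into (1/2,1)). Then the derivative of R^w ∘ G ∘ L_t at the point L_q(y) is at least (1/2) · t · r · (1-2y)^{-q} ≥ 1/2. -/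
theorem stmt_16 (ℓ r q t : ℝ) (hℓ : 1 ≤ ℓ) (hr : 1 ≤ r) (hq : 1 ≤ q) (ht : 1 ≤ t)
    (hqt : q * t = ℓ) (w : ℕ) (y : ℝ) (hy : y ∈ Set.Ico (0 : ℝ) (1 / 2))
    (hw : (2 : ℝ) ^ w * (1 - 2 * y) ^ (ℓ * r) > 1 / 4) :
    deriv (fun x : ℝ => (fun z : ℝ => 2 * z - 1)^[w] (1 - (1 - 2 * x) ^ (t * r)))
        (1 / 2 * (1 - (1 - 2 * y) ^ q)) ≥ 1 / 2 * t * r * (1 - 2 * y) ^ (-q) ∧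
      1 / 2 * t * r * (1 - 2 * y) ^ (-q) ≥ 1 / 2 := by
  obtain ⟨hy0, hy2⟩ := hy
  have hc : (0 : ℝ) < 1 - 2 * y := by linarith
  set c : ℝ := 1 - 2 * y with hcdef
  have hc1 : c ≤ 1 := by simp only [hcdef]; linarith
  set a : ℝ := 1 / 2 * (1 - c ^ q) with hadef
  have ha : 1 - 2 * a = c ^ q := by simp only [hadef]; ring
  have hcq : (0 : ℝ) < c ^ q := Real.rpow_pos_of_pos hc q
  have hclr : (0 : ℝ) < c ^ (ℓ * r) := Real.rpow_pos_of_pos hc (ℓ * r)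
  have hcnq : (0 : ℝ) < c ^ (-q) := Real.rpow_pos_of_pos hc (-q)
  -- iterate formula
  have hiter : ∀ (n : ℕ) (z : ℝ), (fun z : ℝ => 2 * z - 1)^[n] z = 2 ^ n * z - (2 ^ n - 1) := by
    intro n z
    induction n with
    | zero => simp
    | succ n ih =>
      rw [Function.iterate_succ_apply', ih, pow_succ]
      ring
  -- derivative
  have h0 : HasDerivAt (fun x : ℝ => 1 - 2 * x) (-2) a := by
    simpa using ((hasDerivAt_id a).const_mul (2 : ℝ)).const_sub (1 : ℝ)
  have h1 : HasDerivAt (fun x : ℝ => (1 - 2 * x) ^ (t * r))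
      ((-2) * (t * r) * (c ^ q) ^ (t * r - 1)) a := by
    have := h0.rpow_const (p := t * r) (Or.inl (by rw [ha]; exact ne_of_gt hcq))
    simpa [ha] using this
  have hd : HasDerivAt (fun x : ℝ => 2 ^ w * (1 - (1 - 2 * x) ^ (t * r)) - (2 ^ w - 1))
      (2 ^ w * (2 * t * r * (c ^ q) ^ (t * r - 1))) a := by
    have := (((hasDerivAt_const a (1 : ℝ)).sub h1).const_mul ((2 : ℝ) ^ w)).sub_const
      ((2 : ℝ) ^ w - 1)
    convert this using 1
    · rfl
    · rfl
    · rfl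
    · ring
  have hDval : deriv (fun x : ℝ => (fun z : ℝ => 2 * z - 1)^[w] (1 - (1 - 2 * x) ^ (t * r))) a
      = 2 ^ w * (2 * t * r * (c ^ q) ^ (t * r - 1)) := by
    have : (fun x : ℝ => (fun z : ℝ => 2 * z - 1)^[w] (1 - (1 - 2 * x) ^ (t * r)))
        = (fun x : ℝ => 2 ^ w * (1 - (1 - 2 * x) ^ (t * r)) - (2 ^ w - 1)) := by
      funext x; exact hiter _ _
    rw [this, hd.deriv]
  have hexp : (c ^ q) ^ (t * r - 1) = c ^ (ℓ * r) * c ^ (-q) := by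
    rw [← Real.rpow_mul hc.le, ← Real.rpow_add hc]
    congr 1
    rw [← hqt]; ring
  have hX : (0 : ℝ) < 2 * t * r * c ^ (-q) := by positivity
  have hX1 : (1 : ℝ) ≤ c ^ (-q) :=
    Real.one_le_rpow_of_pos_of_le_one_of_nonpos hc hc1 (by linarith)
  constructor
  · rw [hDval, hexp]
    nlinarith [mul_le_mul_of_nonneg_right hw.le hX.le, hX]
  · have htr : (1 : ℝ) ≤ t * r := one_le_mul_of_one_le_of_one_le ht hr
    have := mul_le_mul htr hX1 zero_le_one (by linarith : (0:ℝ) ≤ t * r)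
    nlinarith
end
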